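/- arXiv:2603.06769 — 5 statements merged into one kernel-verified Lean document; each statement's English description precedes it below -/
import Mathlib

section
/- Let φ : (0,∞) → ℝ be continuous and non-constant on every nonempty open subinterval (a,b) ⊂ (0,∞). Suppose there exists a function f defined on {(s,t) : 0 < s < t} such that for every pair 0 < s < t the quantity φ(t−τ) − f(s,t)·φ(s−τ) takes the same value for all τ ∈ (0,s). Then there exists a real constant β such that f(s,t) = exp(−β(t−s)) for all 0 < s < t. -/
/-!
Substituting `w = s - τ`, the hypothesis says `φ (w + (t - s)) = f s t * φ w + c` on `(0, s)`.
As `φ` is not constant on any interval `(0, r)`, the slope is determined by the relation on any such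
interval, so `f s t = g (t - s)` depends only on the step, and
`φ (u + h) - φ (v + h) = g h * (φ u - φ v)` for all `u, v > 0`. Shifting by `a` and then by `b`
gives `g (a + b) = g a * g b`; `g` is continuous, being a difference quotient of `φ`, and it does not
vanish because `φ` is not constant on `(h, ∞)`. So `log ∘ g` solves Cauchy's equation on `(0, ∞)`
and is linear.
-/

open Set Real Filter Topology

lemma sub_eq_sub_of_map_add_Ioi {L : ℝ → ℝ}
    (hadd : ∀ a b, 0 < a → 0 < b → L (a + b) = L a + L b) {x K K' : ℝ} (hK : 0 < K)
    (hK' : 0 < K') (hxK : 0 < x + K) (hxK' : 0 < x + K') :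
    L (x + K) - L K = L (x + K') - L K' := by
  have h₁ := hadd _ _ hxK hK'
  have h₂ := hadd _ _ hxK' hK
  rw [show x + K' + K = x + K + K' by ring] at h₂
  linarith

lemma exists_eq_mul_of_map_add_Ioi {L : ℝ → ℝ}
    (hadd : ∀ a b, 0 < a → 0 < b → L (a + b) = L a + L b) (hcont : ContinuousOn L (Ioi 0)) :
    ∃ c, ∀ x, 0 < x → L x = c * x := by
  -- Extend `L` to an additive function on `ℝ` by `M x = L (x + K) - L K` for any large `K`.
  set M : ℝ → ℝ := fun x => L (x + (|x| + 1)) - L (|x| + 1)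
  have hM : ∀ x K, 0 < K → 0 < x + K → M x = L (x + K) - L K := fun x K hK hxK =>
    sub_eq_sub_of_map_add_Ioi hadd (by positivity) hK (by linarith [neg_abs_le x]) hxK
  have hMadd : ∀ x y, M (x + y) = M x + M y := fun x y => by
    have hx : 0 < x + (|x| + 1) := by linarith [neg_abs_le x]
    have hy : 0 < y + (|y| + 1) := by linarith [neg_abs_le y]
    have hx₁ : (0 : ℝ) < |x| + 1 := by positivity
    have hy₁ : (0 : ℝ) < |y| + 1 := by positivity
    rw [hM (x + y) (|x| + 1 + (|y| + 1)) (by positivity) (by linarith),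
      show x + y + (|x| + 1 + (|y| + 1)) = x + (|x| + 1) + (y + (|y| + 1)) by ring,
      hadd _ _ hx hy, hadd _ _ hx₁ hy₁]
    simp only [M]
    ring
  have hMcont : Continuous M := continuous_iff_continuousAt.2 fun x₀ => by
    set K := |x₀| + 1
    have hx₀K : 0 < x₀ + K := by linarith [neg_abs_le x₀]
    have hnhds : Ioi (-K) ∈ 𝓝 x₀ := Ioi_mem_nhds (by linarith)
    have hLK : ContinuousAt (fun x => L (x + K) - L K) x₀ :=
      (ContinuousAt.comp (f := (· + K)) (x := x₀) (hcont.continuousAt (Ioi_mem_nhds hx₀K))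
        (continuous_add_const K).continuousAt).sub continuousAt_const
    exact hLK.congr (eventually_of_mem hnhds fun x hx =>
      (hM x K (by positivity) (by linarith [mem_Ioi.1 hx])).symm)
  refine ⟨M 1, fun x hx => ?_⟩
  have hlin := map_real_smul (AddMonoidHom.mk' M hMadd) hMcont x 1
  simp only [AddMonoidHom.mk'_apply, smul_eq_mul, mul_one] at hlin
  rw [← mul_comm, ← hlin, hM x 1 one_pos (by linarith), hadd x 1 hx one_pos]
  ring

lemma exists_eq_exp_of_map_add_eq_mul_Ioi {g : ℝ → ℝ}
    (hmul : ∀ a b, 0 < a → 0 < b → g (a + b) = g a * g b) (hne : ∀ x, 0 < x → g x ≠ 0)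
    (hcont : ContinuousOn g (Ioi 0)) : ∃ β, ∀ x, 0 < x → g x = exp (-β * x) := by
  have hpos : ∀ x, 0 < x → 0 < g x := fun x hx => by
    rw [← add_halves x, hmul _ _ (half_pos hx) (half_pos hx)]
    exact mul_self_pos.2 (hne _ (half_pos hx))
  obtain ⟨c, hc⟩ := exists_eq_mul_of_map_add_Ioi (L := fun x => log (g x))
    (fun a b ha hb => by simp only [hmul a b ha hb, log_mul (hne a ha) (hne b hb)])
    (hcont.log hne)
  exact ⟨-c, fun x hx => by rw [neg_neg, ← hc x hx, exp_log (hpos x hx)]⟩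

section ShiftCoefficient

variable {φ g : ℝ → ℝ}

lemma shift_coeff_map_add
    (hshift : ∀ h u v, 0 < h → 0 < u → 0 < v → φ (u + h) - φ (v + h) = g h * (φ u - φ v))
    {u v : ℝ} (hu : 0 < u) (hv : 0 < v) (huv : φ u ≠ φ v) {a b : ℝ} (ha : 0 < a) (hb : 0 < b) :
    g (a + b) = g a * g b := by
  refine mul_right_cancel₀ (sub_ne_zero.2 huv) ?_
  have hab := hshift (a + b) u v (add_pos ha hb) hu hv
  have ha' := hshift a u v ha hu hv
  have hb' := hshift b (u + a) (v + a) hb (add_pos hu ha) (add_pos hv ha)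
  rw [add_assoc, add_assoc] at hb'
  linear_combination -hab + hb' + g b * ha'

lemma shift_coeff_ne_zero
    (hshift : ∀ h u v, 0 < h → 0 < u → 0 < v → φ (u + h) - φ (v + h) = g h * (φ u - φ v))
    {h x y : ℝ} (hh : 0 < h) (hx : h < x) (hy : h < y) (hxy : φ x ≠ φ y) : g h ≠ 0 := by
  intro hg
  have := hshift h (x - h) (y - h) hh (sub_pos.2 hx) (sub_pos.2 hy)
  rw [hg, zero_mul, sub_add_cancel, sub_add_cancel, sub_eq_zero] at this
  exact hxy this

lemma shift_coeff_continuousOn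
    (hshift : ∀ h u v, 0 < h → 0 < u → 0 < v → φ (u + h) - φ (v + h) = g h * (φ u - φ v))
    (hcont : ContinuousOn φ (Ioi 0)) {u v : ℝ} (hu : 0 < u) (hv : 0 < v) (huv : φ u ≠ φ v) :
    ContinuousOn g (Ioi 0) := by
  have hφ : ∀ w, 0 < w → ContinuousOn (fun h => φ (w + h)) (Ioi 0) := fun w hw =>
    hcont.comp (continuous_const_add w).continuousOn fun h hh => add_pos hw hh
  refine ((hφ u hu).sub (hφ v hv)).div_const (φ u - φ v) |>.congr fun h hh => ?_
  simp only [Pi.sub_apply]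
  rw [hshift h u v hh hu hv, mul_div_cancel_right₀ _ (sub_ne_zero.2 huv)]

lemma exists_shift_coeff_eq_exp
    (hshift : ∀ h u v, 0 < h → 0 < u → 0 < v → φ (u + h) - φ (v + h) = g h * (φ u - φ v))
    (hcont : ContinuousOn φ (Ioi 0)) (hnc : ∀ h, 0 ≤ h → ∃ x > h, ∃ y > h, φ x ≠ φ y) :
    ∃ β, ∀ h, 0 < h → g h = exp (-β * h) := by
  obtain ⟨u, hu, v, hv, huv⟩ := hnc 0 le_rfl
  refine exists_eq_exp_of_map_add_eq_mul_Ioi (fun a b => shift_coeff_map_add hshift hu hv huv)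
    (fun h hh => ?_) (shift_coeff_continuousOn hshift hcont hu hv huv)
  obtain ⟨x, hx, y, hy, hxy⟩ := hnc h hh.le
  exact shift_coeff_ne_zero hshift hh hx hy hxy

end ShiftCoefficient

lemma shift_sub_eq_of_forall_sub_eq {φ : ℝ → ℝ} {s t a c : ℝ}
    (hc : ∀ τ ∈ Ioo 0 s, φ (t - τ) - a * φ (s - τ) = c) {u v : ℝ} (hu : u ∈ Ioo 0 s)
    (hv : v ∈ Ioo 0 s) : φ (u + (t - s)) - φ (v + (t - s)) = a * (φ u - φ v) := by
  have key : ∀ w ∈ Ioo 0 s, φ (w + (t - s)) = a * φ w + c := fun w hw => by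
    have := hc (s - w) ⟨sub_pos.2 hw.2, sub_lt_self s hw.1⟩
    rw [sub_sub_cancel, show t - (s - w) = w + (t - s) by ring] at this
    linarith
  rw [key u hu, key v hv]
  ring

/-- If φ is continuous on (0,∞) and non-constant on every nonempty open
subinterval of (0,∞), and f(s,t) is such that φ(t−τ) − f(s,t)·φ(s−τ) does not depend on
τ ∈ (0,s) for every 0 < s < t, then f(s,t) = exp(−β(t−s)) for some real β. -/
theorem stmt_0 (φ : ℝ → ℝ) (f : ℝ → ℝ → ℝ)
    (hcont : ContinuousOn φ (Set.Ioi 0))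
    (hnc : ∀ a b : ℝ, 0 ≤ a → a < b →
      ∃ x ∈ Set.Ioo a b, ∃ y ∈ Set.Ioo a b, φ x ≠ φ y)
    (hf : ∀ s t : ℝ, 0 < s → s < t →
      ∃ c : ℝ, ∀ τ ∈ Set.Ioo (0 : ℝ) s, φ (t - τ) - f s t * φ (s - τ) = c) :
    ∃ β : ℝ, ∀ s t : ℝ, 0 < s → s < t → f s t = Real.exp (-β * (t - s)) := by
  set g : ℝ → ℝ := fun h => f 1 (1 + h)
  -- The relations for `(s, t)` and `(1, 1 + (t - s))` both hold on `(0, min s 1)`.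
  have hslope : ∀ s t, 0 < s → s < t → f s t = g (t - s) := by
    intro s t hs hst
    obtain ⟨x, hx, y, hy, hxy⟩ := hnc 0 (min s 1) le_rfl (lt_min hs one_pos)
    obtain ⟨c, hc⟩ := hf s t hs hst
    obtain ⟨c₁, hc₁⟩ := hf 1 (1 + (t - s)) one_pos (by linarith)
    have h := shift_sub_eq_of_forall_sub_eq hc ⟨hx.1, hx.2.trans_le (min_le_left _ _)⟩
      ⟨hy.1, hy.2.trans_le (min_le_left _ _)⟩
    have h₁ := shift_sub_eq_of_forall_sub_eq hc₁ ⟨hx.1, hx.2.trans_le (min_le_right _ _)⟩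
      ⟨hy.1, hy.2.trans_le (min_le_right _ _)⟩
    rw [add_sub_cancel_left, h] at h₁
    exact mul_right_cancel₀ (sub_ne_zero.2 hxy) h₁
  have hshift : ∀ h u v, 0 < h → 0 < u → 0 < v → φ (u + h) - φ (v + h) = g h * (φ u - φ v) := by
    intro h u v hh hu hv
    obtain ⟨c, hc⟩ := hf (u + v) (u + v + h) (add_pos hu hv) (by linarith)
    have := shift_sub_eq_of_forall_sub_eq hc ⟨hu, lt_add_of_pos_right u hv⟩
      ⟨hv, lt_add_of_pos_left v hu⟩
    rwa [add_sub_cancel_left, hslope _ _ (add_pos hu hv) (by linarith), add_sub_cancel_left] at this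
  obtain ⟨β, hβ⟩ := exists_shift_coeff_eq_exp hshift hcont fun h hh => by
    obtain ⟨x, hx, y, hy, hxy⟩ := hnc h (h + 1) hh (lt_add_one h)
    exact ⟨x, hx.1, y, hy.1, hxy⟩
  exact ⟨β, fun s t hs hst => (hslope s t hs hst).trans (hβ _ (sub_pos.2 hst))⟩
end

section
/- Let β > 0 and let φ : (0,∞) → ℝ be any function. Suppose that for every pair 0 < s < t the quantity φ(t−τ) − exp(−β(t−s))·φ(s−τ) takes the same value for all τ ∈ (0,s). Then there exist real constants δ and α such that φ(x) = δ + α·exp(−βx) for all x > 0. -/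
/-!
Comparing the condition at two values of `τ` shows that shifting an increment of `φ` by `d`
multiplies it by `exp (-β d)`, so `C h = exp (β a) * (φ (a + h) - φ a)` does not depend on `a > 0`.
Splitting an increment in two gives `C (h + k) = C h + exp (-β h) * C k`; comparing this with the
same identity for `k + h` forces `C h = K * (1 - exp (-β h))`, and hence `φ + K exp (-β ·)` is
constant on `(0, ∞)`.
-/

open Real

def TauIndependent (β : ℝ) (φ : ℝ → ℝ) : Prop :=
  ∀ s t : ℝ, 0 < s → s < t →
    ∃ c : ℝ, ∀ τ ∈ Set.Ioo (0 : ℝ) s, φ (t - τ) - exp (-β * (t - s)) * φ (s - τ) = c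

theorem eq_mul_one_sub_exp_of_add_eq {β : ℝ} (hβ : β ≠ 0) {C : ℝ → ℝ}
    (hC : ∀ h k, 0 < h → 0 < k → C (h + k) = C h + exp (-β * h) * C k) {h : ℝ} (hh : 0 < h) :
    C h = C 1 / (1 - exp (-β)) * (1 - exp (-β * h)) := by
  have hne : 1 - exp (-β) ≠ 0 := by
    rw [sub_ne_zero, ne_comm, Ne, exp_eq_one_iff, neg_eq_zero]
    exact hβ
  have e₁ := hC h 1 hh one_pos
  have e₂ := hC 1 h one_pos hh
  rw [add_comm, mul_one] at e₂
  rw [div_mul_eq_mul_div, eq_div_iff hne]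
  linear_combination e₂ - e₁

namespace TauIndependent

variable {β : ℝ} {φ : ℝ → ℝ}

theorem increment_shift (hφ : TauIndependent β φ) {a h d : ℝ} (ha : 0 < a) (hh : 0 < h)
    (hd : 0 < d) : φ (a + d + h) - φ (a + d) = exp (-β * d) * (φ (a + h) - φ a) := by
  obtain ⟨c, hc⟩ := hφ (a + h + 1) (a + h + 1 + d) (by linarith) (by linarith)
  have e₁ : φ (a + d) - exp (-β * d) * φ a = c := by
    convert hc (h + 1) ⟨by linarith, by linarith⟩ using 4 <;> ring
  have e₂ : φ (a + d + h) - exp (-β * d) * φ (a + h) = c := by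
    convert hc 1 ⟨one_pos, by linarith⟩ using 4 <;> ring
  linear_combination e₂ - e₁

theorem exp_mul_increment_eq (hφ : TauIndependent β φ) {a b h : ℝ} (ha : 0 < a) (hb : 0 < b)
    (hh : 0 < h) : exp (β * a) * (φ (a + h) - φ a) = exp (β * b) * (φ (b + h) - φ b) := by
  wlog hab : a < b generalizing a b
  · rcases (not_lt.1 hab).lt_or_eq with hba | rfl
    · exact (this hb ha hba).symm
    · rfl
  have hshift := hφ.increment_shift ha hh (sub_pos.2 hab)
  rw [add_sub_cancel] at hshift
  rw [hshift, ← mul_assoc, ← exp_add]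
  ring_nf

theorem exists_increment_eq (hφ : TauIndependent β φ) (hβ : β ≠ 0) :
    ∃ K, ∀ a x, 0 < a → a < x → φ x - φ a = K * (exp (-β * a) - exp (-β * x)) := by
  set C : ℝ → ℝ := fun h ↦ exp β * (φ (1 + h) - φ 1)
  have hC : ∀ a h, 0 < a → 0 < h → exp (β * a) * (φ (a + h) - φ a) = C h := fun a h ha hh ↦ by
    simpa using hφ.exp_mul_increment_eq ha one_pos hh
  have hCadd : ∀ h k, 0 < h → 0 < k → C (h + k) = C h + exp (-β * h) * C k := by
    intro h k hh hk
    have hexp : exp (β * 1) = exp (-β * h) * exp (β * (1 + h)) := by rw [← exp_add]; ring_nf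
    rw [← hC 1 (h + k) one_pos (by positivity), ← hC 1 h one_pos hh,
      ← hC (1 + h) k (by positivity) hk, hexp, ← add_assoc]
    ring
  refine ⟨C 1 / (1 - exp (-β)), fun a x ha hax ↦ ?_⟩
  have hincr := hC a (x - a) ha (sub_pos.2 hax)
  rw [eq_mul_one_sub_exp_of_add_eq hβ hCadd (sub_pos.2 hax), add_sub_cancel] at hincr
  have hexp : exp (-β * x) = exp (-β * a) * exp (-β * (x - a)) := by rw [← exp_add]; ring_nf
  have hinv : exp (-β * a) * exp (β * a) = 1 := by rw [← exp_add]; simp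
  rw [hexp]
  linear_combination exp (-β * a) * hincr - (φ x - φ a) * hinv

end TauIndependent

/-- If for every 0 < s < t the quantity
φ(t−τ) − exp(−β(t−s))·φ(s−τ) is independent of τ ∈ (0,s), where β > 0,
then φ(x) = δ + α·exp(−βx) on (0,∞) for some real constants δ, α. -/
theorem stmt_1 (β : ℝ) (hβ : 0 < β) (φ : ℝ → ℝ)
    (hf : ∀ s t : ℝ, 0 < s → s < t →
      ∃ c : ℝ, ∀ τ ∈ Set.Ioo (0 : ℝ) s,
        φ (t - τ) - Real.exp (-β * (t - s)) * φ (s - τ) = c) :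
    ∃ δ α : ℝ, ∀ x : ℝ, 0 < x → φ x = δ + α * Real.exp (-β * x) := by
  obtain ⟨K, hK⟩ := TauIndependent.exists_increment_eq hf hβ.ne'
  refine ⟨φ 1 + K * exp (-β * 1), -K, fun x hx ↦ ?_⟩
  rcases lt_trichotomy x 1 with hx1 | rfl | hx1
  · linear_combination -hK x 1 hx hx1
  · ring
  · linear_combination hK 1 x one_pos hx1
end

section
/- Let φ : (0,∞) → ℝ be continuous and non-constant on every nonempty open subinterval of (0,∞). Suppose there exists a function f on {(s,t) : 0 < s < t} such that for every 0 < s < t the quantity φ(t−τ) − f(s,t)·φ(s−τ) takes the same value for all τ ∈ (0,s). Then either φ is an affine function (φ(x) = δ + c·x for some reals δ, c with c ≠ 0, and f ≡ 1), or there exist real constants δ, α, β with β ≠ 0 and α ≠ 0 such that φ(x) = δ + α·exp(−βx) for all x > 0 and f(s,t) = exp(−β(t−s)) for all 0 < s < t. -/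
/-!
Putting `u = s - τ`, the hypothesis reads `φ (u + h) = F h * φ u + C h` for `u ∈ (0, s)`, with lag
`h = t - s`. Since `φ` is constant on no interval, the coefficients depend only on the lag, and the
relation holds for all `u > 0`. Composing two translations makes `F` multiplicative; it is
continuous (a difference quotient of `φ`) and nonzero, so `F h = exp (L * h)`. If `L = 0`, `C` is
a continuous additive function and `φ` is affine. Otherwise, translating by `1` and by `x` in
either order gives `C x = δ * (1 - exp (L * x))`, and `φ - δ` is a multiple of `exp (L * x)`.
-/

open Set Real

lemma coeffs_eq_of_affine_eqOn {φ : ℝ → ℝ} {s : Set ℝ} (hφ : ∃ x ∈ s, ∃ y ∈ s, φ x ≠ φ y)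
    {a b a' b' : ℝ} (h : ∀ u ∈ s, a * φ u + b = a' * φ u + b') : a = a' ∧ b = b' := by
  obtain ⟨x, hx, y, hy, hxy⟩ := hφ
  have hx' := h x hx
  have hy' := h y hy
  have ha : a = a' := by
    by_contra hne
    exact hxy (mul_left_cancel₀ (sub_ne_zero.mpr hne) (by linarith))
  subst ha
  exact ⟨rfl, by linarith⟩

/-- The additive extension to `ℝ` of a function additive on `(0, ∞)`; any shift `n > 0` with
`x + n > 0` may replace `|x| + 1`. -/
def extendAddIoi (g : ℝ → ℝ) (x : ℝ) : ℝ := g (x + (|x| + 1)) - g (|x| + 1)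

section extendAddIoi

variable {g : ℝ → ℝ}

lemma extendAddIoi_eq (hadd : ∀ a b : ℝ, 0 < a → 0 < b → g (a + b) = g a + g b)
    {x n : ℝ} (hn : 0 < n) (hxn : 0 < x + n) : extendAddIoi g x = g (x + n) - g n := by
  have hm : 0 < |x| + 1 := by positivity
  have hxm : 0 < x + (|x| + 1) := by linarith [neg_abs_le x]
  have h₁ := hadd _ _ hxn hm
  have h₂ := hadd _ _ hxm hn
  rw [show x + n + (|x| + 1) = x + (|x| + 1) + n by ring] at h₁
  unfold extendAddIoi
  linarith

lemma extendAddIoi_add (hadd : ∀ a b : ℝ, 0 < a → 0 < b → g (a + b) = g a + g b) (x y : ℝ) :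
    extendAddIoi g (x + y) = extendAddIoi g x + extendAddIoi g y := by
  set n := |x| + |y| + 1
  have hn : 0 < n := by positivity
  have hx : 0 < x + n := by linarith [neg_abs_le x, abs_nonneg y]
  have hy : 0 < y + n := by linarith [neg_abs_le y, abs_nonneg x]
  rw [extendAddIoi_eq hadd (n := n + n) (by linarith) (by linarith), extendAddIoi_eq hadd hn hx,
    extendAddIoi_eq hadd hn hy, hadd n n hn hn,
    show x + y + (n + n) = x + n + (y + n) by ring, hadd _ _ hx hy]
  ring

lemma continuous_extendAddIoi (hg : ContinuousOn g (Ioi 0))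
    (hadd : ∀ a b : ℝ, 0 < a → 0 < b → g (a + b) = g a + g b) : Continuous (extendAddIoi g) := by
  refine continuous_iff_continuousAt.2 fun x₀ => ?_
  set n := |x₀| + 1
  have hn : 0 < n := by positivity
  have hshift : ContinuousAt (fun x => g (x + n) - g n) x₀ := by
    refine ContinuousAt.sub ?_ continuousAt_const
    refine (hg.continuousAt (Ioi_mem_nhds ?_)).comp (continuous_add_const n).continuousAt
    linarith [neg_abs_le x₀]
  refine hshift.congr (Filter.eventuallyEq_of_mem (Ioi_mem_nhds (sub_one_lt x₀)) fun x hx => ?_)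
  exact (extendAddIoi_eq hadd hn (by linarith [neg_abs_le x₀, mem_Ioi.1 hx])).symm

theorem eq_mul_of_add_of_continuousOn_Ioi (hg : ContinuousOn g (Ioi 0))
    (hadd : ∀ a b : ℝ, 0 < a → 0 < b → g (a + b) = g a + g b) {x : ℝ} (hx : 0 < x) :
    g x = x * g 1 := by
  have hext : ∀ y, 0 < y → extendAddIoi g y = g y := fun y hy => by
    rw [extendAddIoi_eq hadd one_pos (by linarith), hadd y 1 hy one_pos, add_sub_cancel_right]
  have hlin := map_real_smul (AddMonoidHom.mk' _ (extendAddIoi_add hadd))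
    (continuous_extendAddIoi hg hadd) x 1
  simp only [AddMonoidHom.mk'_apply, smul_eq_mul, mul_one] at hlin
  rw [← hext x hx, ← hext 1 one_pos, hlin]

end extendAddIoi

theorem eq_exp_of_mul_of_continuousOn_Ioi {F : ℝ → ℝ} (hF : ContinuousOn F (Ioi 0))
    (hne : ∀ h, 0 < h → F h ≠ 0) (hmul : ∀ a b : ℝ, 0 < a → 0 < b → F (a + b) = F a * F b)
    {h : ℝ} (hh : 0 < h) : F h = exp (log (F 1) * h) := by
  have hpos : ∀ h, 0 < h → 0 < F h := fun h hh => by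
    rw [← add_halves h, hmul _ _ (half_pos hh) (half_pos hh)]
    exact mul_self_pos.2 (hne _ (half_pos hh))
  have hlog := eq_mul_of_add_of_continuousOn_Ioi (g := fun h => log (F h))
    (hF.log fun h hh => hne h hh) (fun a b ha hb => by
      simp only [hmul a b ha hb, log_mul (hne a ha) (hne b hb)]) hh
  rw [← exp_log (hpos h hh), hlog, mul_comm]

lemma ContinuousOn.comp_const_add_Ioi {φ : ℝ → ℝ} (hφ : ContinuousOn φ (Ioi 0)) {u : ℝ}
    (hu : 0 ≤ u) : ContinuousOn (fun h => φ (u + h)) (Ioi 0) :=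
  hφ.comp (continuous_const_add u).continuousOn fun h hh => by
    simp only [mem_Ioi] at hh ⊢; linarith

section Translation

variable {φ F C : ℝ → ℝ}

lemma translation_factor_mul (htr : ∀ h, 0 < h → ∀ u, 0 < u → φ (u + h) = F h * φ u + C h)
    (hφ : ∃ x ∈ Ioi (0 : ℝ), ∃ y ∈ Ioi 0, φ x ≠ φ y) {a b : ℝ} (ha : 0 < a) (hb : 0 < b) :
    F (a + b) = F a * F b := by
  refine (coeffs_eq_of_affine_eqOn hφ (b := C (a + b)) (b' := F b * C a + C b)
    fun u (hu : 0 < u) => ?_).1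
  calc F (a + b) * φ u + C (a + b) = φ (u + a + b) := by
        rw [add_assoc, htr _ (add_pos ha hb) u hu]
    _ = F a * F b * φ u + (F b * C a + C b) := by
        rw [htr b hb _ (add_pos hu ha), htr a ha u hu]; ring

lemma translation_factor_ne_zero (htr : ∀ h, 0 < h → ∀ u, 0 < u → φ (u + h) = F h * φ u + C h)
    {h : ℝ} (hh : 0 < h) (hφ : ∃ x ∈ Ioi h, ∃ y ∈ Ioi h, φ x ≠ φ y) : F h ≠ 0 := by
  intro hF
  obtain ⟨x, hx, y, hy, hxy⟩ := hφ
  have hconst : ∀ z ∈ Ioi h, φ z = C h := fun z (hz : h < z) => by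
    simpa [hF] using htr h hh (z - h) (sub_pos.2 hz)
  exact hxy ((hconst x hx).trans (hconst y hy).symm)

lemma continuousOn_translation_factor (hcont : ContinuousOn φ (Ioi 0))
    (htr : ∀ h, 0 < h → ∀ u, 0 < u → φ (u + h) = F h * φ u + C h)
    {u v : ℝ} (hu : 0 < u) (hv : 0 < v) (huv : φ u ≠ φ v) : ContinuousOn F (Ioi 0) := by
  refine (((hcont.comp_const_add_Ioi hu.le).sub (hcont.comp_const_add_Ioi hv.le)).div_const
    (φ u - φ v)).congr fun h (hh : 0 < h) => ?_
  simp only [Pi.sub_apply]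
  rw [eq_div_iff (sub_ne_zero.2 huv), htr h hh u hu, htr h hh v hv]
  ring

theorem translation_factor_eq_exp (hcont : ContinuousOn φ (Ioi 0))
    (htr : ∀ h, 0 < h → ∀ u, 0 < u → φ (u + h) = F h * φ u + C h)
    (hnc : ∀ a b : ℝ, 0 ≤ a → a < b → ∃ x ∈ Ioo a b, ∃ y ∈ Ioo a b, φ x ≠ φ y)
    {h : ℝ} (hh : 0 < h) : F h = exp (log (F 1) * h) := by
  have hnc' : ∀ a, 0 ≤ a → ∃ x ∈ Ioi a, ∃ y ∈ Ioi a, φ x ≠ φ y := fun a ha => by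
    obtain ⟨x, hx, y, hy, hxy⟩ := hnc a (a + 1) ha (lt_add_one a)
    exact ⟨x, hx.1, y, hy.1, hxy⟩
  obtain ⟨u, hu, v, hv, huv⟩ := hnc' 0 le_rfl
  exact eq_exp_of_mul_of_continuousOn_Ioi (continuousOn_translation_factor hcont htr hu hv huv)
    (fun h hh => translation_factor_ne_zero htr hh (hnc' h hh.le))
    (fun a b ha hb => translation_factor_mul htr (hnc' 0 le_rfl) ha hb) hh

theorem exists_affine_of_translation (hcont : ContinuousOn φ (Ioi 0))
    (htr : ∀ h, 0 < h → ∀ u, 0 < u → φ (u + h) = φ u + C h) :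
    ∃ δ c : ℝ, ∀ x, 0 < x → φ x = δ + c * x := by
  have hC : ∀ h, 0 < h → C h = φ (1 + h) - φ 1 := fun h hh => by
    rw [htr h hh 1 one_pos]; ring
  have hCadd : ∀ a b : ℝ, 0 < a → 0 < b → C (a + b) = C a + C b := fun a b ha hb => by
    rw [hC _ (add_pos ha hb), hC a ha, ← add_assoc, htr b hb _ (by linarith)]; ring
  have hCcont : ContinuousOn C (Ioi 0) :=
    ((hcont.comp_const_add_Ioi zero_le_one).sub continuousOn_const).congr fun h hh => hC h hh
  refine ⟨φ 1 - C 1, C 1, fun x hx => ?_⟩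
  have h₁ := htr 1 one_pos x hx
  have h₂ := htr x hx 1 one_pos
  rw [add_comm 1 x, eq_mul_of_add_of_continuousOn_Ioi hCcont hCadd hx] at h₂
  linarith

theorem exists_exp_of_translation {L : ℝ} (hL : L ≠ 0)
    (htr : ∀ h, 0 < h → ∀ u, 0 < u → φ (u + h) = exp (L * h) * φ u + C h) :
    ∃ δ α : ℝ, ∀ x, 0 < x → φ x = δ + α * exp (L * x) := by
  have hE : 1 - exp L ≠ 0 := by
    rw [sub_ne_zero, ne_comm, Ne, exp_eq_one_iff]; exact hL
  refine ⟨C 1 / (1 - exp L), (φ 1 - C 1 / (1 - exp L)) / exp L, fun x hx => ?_⟩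
  -- translating `1` by `x` and by `1` in either order
  have hcomm : exp L * C x + C 1 = exp (L * x) * C 1 + C x := by
    have h₁ := htr 1 one_pos (1 + x) (by linarith)
    have h₂ := htr x hx (1 + 1) (by norm_num)
    rw [htr x hx 1 one_pos] at h₁
    rw [htr 1 one_pos 1 one_pos, show 1 + 1 + x = 1 + x + 1 by ring, h₁, mul_one] at h₂
    linear_combination h₂
  have h₁ := htr 1 one_pos x hx
  have h₂ := htr x hx 1 one_pos
  rw [add_comm 1 x, h₁, mul_one] at h₂
  field_simp
  linear_combination (1 - exp L) * h₂ - hcomm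

end Translation

theorem exists_translation_of_discount {φ : ℝ → ℝ} {f : ℝ → ℝ → ℝ}
    (hnc : ∀ b, 0 < b → ∃ x ∈ Ioo 0 b, ∃ y ∈ Ioo 0 b, φ x ≠ φ y)
    (hf : ∀ s t : ℝ, 0 < s → s < t →
      ∃ c : ℝ, ∀ τ ∈ Ioo (0 : ℝ) s, φ (t - τ) - f s t * φ (s - τ) = c) :
    ∃ F C : ℝ → ℝ, (∀ h, 0 < h → ∀ u, 0 < u → φ (u + h) = F h * φ u + C h) ∧
      ∀ s t, 0 < s → s < t → f s t = F (t - s) := by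
  have hloc : ∀ s t : ℝ, 0 < s → s < t →
      ∃ c, ∀ u ∈ Ioo 0 s, φ (u + (t - s)) = f s t * φ u + c := fun s t hs hst => by
    obtain ⟨c, hc⟩ := hf s t hs hst
    refine ⟨c, fun u hu => ?_⟩
    have := hc (s - u) ⟨by linarith [hu.2], by linarith [hu.1]⟩
    rw [sub_sub_cancel, show t - (s - u) = u + (t - s) by ring] at this
    linarith
  choose! c hc using hloc
  -- two relations with the same lag agree on `(0, min s s')`, where `φ` is not constant
  have huniq : ∀ s t s' t' : ℝ, 0 < s → s < t → 0 < s' → s' < t' → t - s = t' - s' →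
      f s t = f s' t' ∧ c s t = c s' t' := fun s t s' t' hs hst hs' hst' hlag => by
    refine coeffs_eq_of_affine_eqOn (hnc _ (lt_min hs hs')) fun u hu => ?_
    rw [← hc s t hs hst u ⟨hu.1, hu.2.trans_le (min_le_left _ _)⟩, hlag,
      ← hc s' t' hs' hst' u ⟨hu.1, hu.2.trans_le (min_le_right _ _)⟩]
  refine ⟨fun h => f 1 (1 + h), fun h => c 1 (1 + h), fun h hh u hu => ?_, fun s t hs hst => ?_⟩
  · obtain ⟨hf', hc'⟩ := huniq (u + 1) (u + 1 + h) 1 (1 + h) (by linarith) (by linarith) one_pos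
      (by linarith) (by ring)
    have := hc (u + 1) (u + 1 + h) (by linarith) (by linarith) u ⟨hu, by linarith⟩
    rwa [show u + 1 + h - (u + 1) = h by ring, hf', hc'] at this
  · exact (huniq s t 1 (1 + (t - s)) hs hst one_pos (by linarith) (by ring)).1

/-- If φ is continuous and non-constant on every nonempty open subinterval
of (0,∞), and some discount function f makes φ(t−τ) − f(s,t)·φ(s−τ) independent of
τ ∈ (0,s) for every 0 < s < t, then either φ is affine (with f ≡ 1), or
φ(x) = δ + α·exp(−βx) with α, β ≠ 0 and f(s,t) = exp(−β(t−s)). -/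
theorem stmt_3 (φ : ℝ → ℝ) (f : ℝ → ℝ → ℝ)
    (hcont : ContinuousOn φ (Set.Ioi 0))
    (hnc : ∀ a b : ℝ, 0 ≤ a → a < b →
      ∃ x ∈ Set.Ioo a b, ∃ y ∈ Set.Ioo a b, φ x ≠ φ y)
    (hf : ∀ s t : ℝ, 0 < s → s < t →
      ∃ c : ℝ, ∀ τ ∈ Set.Ioo (0 : ℝ) s, φ (t - τ) - f s t * φ (s - τ) = c) :
    (∃ δ c : ℝ, c ≠ 0 ∧ (∀ x : ℝ, 0 < x → φ x = δ + c * x) ∧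
      (∀ s t : ℝ, 0 < s → s < t → f s t = 1)) ∨
    (∃ δ α β : ℝ, β ≠ 0 ∧ α ≠ 0 ∧
      (∀ x : ℝ, 0 < x → φ x = δ + α * Real.exp (-β * x)) ∧
      (∀ s t : ℝ, 0 < s → s < t → f s t = Real.exp (-β * (t - s)))) := by
  obtain ⟨F, C, htr, hfF⟩ := exists_translation_of_discount (hnc 0 · le_rfl) hf
  have hF := fun h (hh : 0 < h) => translation_factor_eq_exp hcont htr hnc hh
  obtain ⟨x, hx, y, hy, hxy⟩ := hnc 0 1 le_rfl one_pos
  rcases eq_or_ne (log (F 1)) 0 with hL | hL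
  · have hF1 : ∀ h, 0 < h → F h = 1 := fun h hh => by rw [hF h hh, hL, zero_mul, exp_zero]
    obtain ⟨δ, c, hφ⟩ := exists_affine_of_translation hcont fun h hh u hu => by
      rw [htr h hh u hu, hF1 h hh, one_mul]
    refine .inl ⟨δ, c, ?_, hφ, fun s t hs hst => by rw [hfF s t hs hst, hF1 _ (sub_pos.2 hst)]⟩
    rintro rfl
    exact hxy (by rw [hφ x hx.1, hφ y hy.1, zero_mul, zero_mul])
  · obtain ⟨δ, α, hφ⟩ := exists_exp_of_translation (φ := φ) (C := C) hL fun h hh u hu => by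
      rw [htr h hh u hu, hF h hh]
    refine .inr ⟨δ, α, -log (F 1), neg_ne_zero.2 hL, ?_, by simpa only [neg_neg] using hφ,
      fun s t hs hst => by rw [hfF s t hs hst, hF _ (sub_pos.2 hst), neg_neg]⟩
    rintro rfl
    exact hxy (by rw [hφ x hx.1, hφ y hy.1, zero_mul, zero_mul])
end

section
/- Let α, β > 0 with α ≠ β and λ₀ ∈ ℝ. A continuous function y : [0,∞) → ℝ satisfies the renewal equation y(t) = λ₀ + ∫₀^t α·exp(−β(t−u))·y(u) du for all t ≥ 0 if and only if y(t) = λ₀·exp((α−β)t) + (βλ₀/(α−β))·(exp((α−β)t) − 1) for all t ≥ 0. -/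
/-!
Writing `G t = ∫₀^t e^{βu} y u du`, the renewal equation reads `y t = λ₀ + α e^{-βt} G t`, so it
is equivalent to the linear ODE `G' = α G + λ₀ e^{βt}` with `G 0 = 0`. Its unique solution
(Grönwall) is `P t = λ₀ (e^{αt} - e^{βt}) / (α - β)`, and `λ₀ + α e^{-βt} P t` is the closed form.
Conversely `P` is a primitive of `e^{βt}` times the closed form, so the closed form solves the
renewal equation.
-/

open MeasureTheory intervalIntegral Real Set

section Primitive

variable {E : Type*} [NormedAddCommGroup E] [NormedSpace ℝ E] {f : ℝ → E} {a : ℝ}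

theorem hasDerivWithinAt_integral_of_continuousOn_Ici [CompleteSpace E]
    (hf : ContinuousOn f (Ici a)) {x : ℝ} (hx : a ≤ x) :
    HasDerivWithinAt (fun u => ∫ t in a..u, f t) (f x) (Ici x) x :=
  have hIoi : Ioi x ⊆ Ici a := fun _ hu => hx.trans (le_of_lt hu)
  integral_hasDerivWithinAt_right
    (hf.mono (uIcc_of_le hx ▸ Icc_subset_Ici_self)).intervalIntegrable
    ⟨Ioi x, self_mem_nhdsWithin, (hf.mono hIoi).aestronglyMeasurable measurableSet_Ioi⟩
    ((hf x hx).mono hIoi)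

theorem continuousOn_integral_of_continuousOn_Ici (hf : ContinuousOn f (Ici a)) {b : ℝ}
    (hab : a ≤ b) : ContinuousOn (fun u => ∫ t in a..u, f t) (Icc a b) := by
  rw [← uIcc_of_le hab]
  exact continuousOn_primitive_interval'
    (hf.mono (uIcc_of_le hab ▸ Icc_subset_Ici_self)).intervalIntegrable left_mem_uIcc

end Primitive

theorem integral_exp_kernel_eq_mul_integral (α β a t : ℝ) (y : ℝ → ℝ) :
    ∫ u in a..t, α * exp (-β * (t - u)) * y u =
      α * exp (-β * t) * ∫ u in a..t, exp (β * u) * y u := by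
  rw [← intervalIntegral.integral_const_mul]
  congr 1 with u
  rw [show -β * (t - u) = -β * t + β * u by ring, exp_add]
  ring

noncomputable def hawkesMeanIntensity (α β lam0 t : ℝ) : ℝ :=
  lam0 * exp ((α - β) * t) + β * lam0 / (α - β) * (exp ((α - β) * t) - 1)

noncomputable def hawkesMeanPrimitive (α β lam0 t : ℝ) : ℝ :=
  lam0 * (exp (α * t) - exp (β * t)) / (α - β)

section ClosedForm

variable {α β : ℝ} (lam0 : ℝ)

theorem hawkesMeanIntensity_eq_add_mul_primitive (hαβ : α ≠ β) (t : ℝ) :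
    hawkesMeanIntensity α β lam0 t =
      lam0 + α * exp (-β * t) * hawkesMeanPrimitive α β lam0 t := by
  have : α - β ≠ 0 := sub_ne_zero.mpr hαβ
  unfold hawkesMeanIntensity hawkesMeanPrimitive
  rw [sub_mul, exp_sub, neg_mul, exp_neg]
  field_simp
  ring

theorem hasDerivAt_hawkesMeanPrimitive (hαβ : α ≠ β) (t : ℝ) :
    HasDerivAt (hawkesMeanPrimitive α β lam0)
      (exp (β * t) * hawkesMeanIntensity α β lam0 t) t := by
  have : α - β ≠ 0 := sub_ne_zero.mpr hαβ
  have hexp (c : ℝ) : HasDerivAt (fun t => exp (c * t)) (c * exp (c * t)) t := by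
    simpa [mul_comm] using ((hasDerivAt_id t).const_mul c).exp
  refine ((((hexp α).sub (hexp β)).const_mul lam0).div_const (α - β)).congr_deriv ?_
  unfold hawkesMeanIntensity
  rw [sub_mul, exp_sub]
  field_simp
  ring

theorem integral_exp_mul_hawkesMeanIntensity (hαβ : α ≠ β) (t : ℝ) :
    ∫ u in (0 : ℝ)..t, exp (β * u) * hawkesMeanIntensity α β lam0 u =
      hawkesMeanPrimitive α β lam0 t := by
  rw [integral_eq_sub_of_hasDerivAt (fun u _ => hasDerivAt_hawkesMeanPrimitive lam0 hαβ u)]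
  · simp [hawkesMeanPrimitive]
  · exact (Continuous.intervalIntegrable (by unfold hawkesMeanIntensity; fun_prop) 0 t)

theorem hawkesMeanIntensity_renewal (hαβ : α ≠ β) (t : ℝ) :
    hawkesMeanIntensity α β lam0 t = lam0 +
      ∫ u in (0 : ℝ)..t, α * exp (-β * (t - u)) * hawkesMeanIntensity α β lam0 u := by
  rw [integral_exp_kernel_eq_mul_integral, integral_exp_mul_hawkesMeanIntensity lam0 hαβ,
    hawkesMeanIntensity_eq_add_mul_primitive lam0 hαβ]

end ClosedForm

theorem eqOn_hawkesMeanIntensity_of_renewal {α β lam0 : ℝ} (hαβ : α ≠ β) {y : ℝ → ℝ}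
    (hy : ContinuousOn y (Ici 0))
    (hrenewal : ∀ t ∈ Ici (0 : ℝ),
      y t = lam0 + ∫ u in (0 : ℝ)..t, α * exp (-β * (t - u)) * y u) :
    EqOn y (hawkesMeanIntensity α β lam0) (Ici 0) := by
  intro t ht
  set G : ℝ → ℝ := fun s => ∫ u in (0 : ℝ)..s, exp (β * u) * y u
  set P : ℝ → ℝ := hawkesMeanPrimitive α β lam0
  have hyG (s : ℝ) (hs : s ∈ Ici 0) : y s = lam0 + α * exp (-β * s) * G s := by
    rw [hrenewal s hs, integral_exp_kernel_eq_mul_integral]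
  have hg : ContinuousOn (fun u => exp (β * u) * y u) (Ici 0) := by fun_prop
  have hcancel (s X : ℝ) :
      exp (β * s) * (lam0 + α * exp (-β * s) * X) = lam0 * exp (β * s) + α * X := by
    rw [neg_mul, exp_neg]
    field_simp
  have hG' (s : ℝ) (hs : s ∈ Ici 0) :
      HasDerivWithinAt G (lam0 * exp (β * s) + α * G s) (Ici s) s := by
    rw [← hcancel, ← hyG s hs]
    exact hasDerivWithinAt_integral_of_continuousOn_Ici hg hs
  have hP' (s : ℝ) : HasDerivAt P (lam0 * exp (β * s) + α * P s) s := by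
    rw [← hcancel, ← hawkesMeanIntensity_eq_add_mul_primitive lam0 hαβ]
    exact hasDerivAt_hawkesMeanPrimitive lam0 hαβ s
  have hGP : G t - P t = 0 := by
    refine eq_zero_of_abs_deriv_le_mul_abs_self_of_eq_zero_right (f := fun s => G s - P s)
      (f' := fun s => α * (G s - P s)) (K := |α|) ?_ ?_ ?_ ?_ t ⟨ht, le_rfl⟩
    · exact (continuousOn_integral_of_continuousOn_Ici hg ht).sub
        (fun s _ => (hP' s).continuousAt.continuousWithinAt)
    · intro s hs
      exact ((hG' s hs.1).sub (hP' s).hasDerivWithinAt).congr_deriv (by ring)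
    · simp [G, P, hawkesMeanPrimitive]
    · exact fun s _ => by simp
  rw [hyG t ht, hawkesMeanIntensity_eq_add_mul_primitive lam0 hαβ, sub_eq_zero.mp hGP]

theorem renewal_of_eqOn_hawkesMeanIntensity {α β lam0 : ℝ} (hαβ : α ≠ β) {y : ℝ → ℝ}
    (hclosed : EqOn y (hawkesMeanIntensity α β lam0) (Ici 0)) :
    ∀ t ∈ Ici (0 : ℝ), y t = lam0 + ∫ u in (0 : ℝ)..t, α * exp (-β * (t - u)) * y u := by
  intro t ht
  rw [hclosed ht, hawkesMeanIntensity_renewal lam0 hαβ t]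
  congr 1
  refine integral_congr fun u hu => ?_
  rw [uIcc_of_le ht] at hu
  simp only [hclosed hu.1]

theorem stmt_7_general (α β lam0 : ℝ) (hαβ : α ≠ β)
    (y : ℝ → ℝ) (hy : ContinuousOn y (Set.Ici 0)) :
    (∀ t ∈ Set.Ici (0 : ℝ),
        y t = lam0 + ∫ u in (0 : ℝ)..t, α * Real.exp (-β * (t - u)) * y u) ↔
    (∀ t ∈ Set.Ici (0 : ℝ),
        y t = lam0 * Real.exp ((α - β) * t)
          + β * lam0 / (α - β) * (Real.exp ((α - β) * t) - 1)) :=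
  ⟨eqOn_hawkesMeanIntensity_of_renewal hαβ hy, renewal_of_eqOn_hawkesMeanIntensity hαβ⟩

/-- For α, β > 0 with α ≠ β, a continuous function y on [0,∞) satisfies
the renewal equation y(t) = λ₀ + ∫₀^t α·exp(−β(t−u))·y(u) du for all t ≥ 0 if and only
if y(t) = λ₀·exp((α−β)t) + (βλ₀/(α−β))·(exp((α−β)t) − 1) for all t ≥ 0. -/
theorem stmt_7 (α β lam0 : ℝ) (hα : 0 < α) (hβ : 0 < β) (hαβ : α ≠ β)
    (y : ℝ → ℝ) (hy : ContinuousOn y (Set.Ici 0)) :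
    (∀ t ∈ Set.Ici (0 : ℝ),
        y t = lam0 + ∫ u in (0 : ℝ)..t, α * Real.exp (-β * (t - u)) * y u) ↔
    (∀ t ∈ Set.Ici (0 : ℝ),
        y t = lam0 * Real.exp ((α - β) * t)
          + β * lam0 / (α - β) * (Real.exp ((α - β) * t) - 1)) :=
  stmt_7_general α β lam0 hαβ y hy
end

section
/- Let λ¹₀ > 0, λ²₀, λ³₀ ≥ 0, let α_{kl} ≥ 0 (k,l ∈ {1,2}) with α₂₂ ≤ β₂, let α₃ ≥ 0, and let β₁, β₂, β₃ > 0 with β₁ ≠ β₂. Define A(1,2) = (λ¹₀/β₁)·(α₁₂α₂₁ − α₁₁α₂₂)/(β₁ − β₂) − (λ¹₀/β₁)·α₁₁ − (λ²₀/β₁)·α₂₁, B(1,2) = (λ¹₀/β₂)·(α₁₁α₂₂ − α₁₂α₂₁)/(β₁ − β₂), and C(1,2) = λ¹₀ − A(1,2) − B(1,2). Then the limit as t → ∞ of [ λ³₀ + λ³₀·(1 − exp(−β₃t))·α₃/β₃ ] / [ C(1,2) + A(1,2)·exp(−β₁t) + B(1,2)·exp(−β₂t) ] exists and equals λ³₀·(α₃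 + β₃)·β₁·β₂ / ( β₃·[ λ¹₀β₁β₂ − λ¹₀(α₁₁α₂₂ − α₁₂α₂₁) + β₂(λ¹₀α₁₁ + λ²₀α₂₁) ] ). -/
open Filter

/-!
Every exponential term decays, so the numerator tends to `λ³₀ (α₃ + β₃) / β₃` and the
denominator to `C(1,2)`. Clearing the denominator `β₁ - β₂` shows `C(1,2) = D / (β₁ β₂)` with
`D = λ¹₀ β₁ β₂ - λ¹₀ (α₁₁ α₂₂ - α₁₂ α₂₁) + β₂ (λ¹₀ α₁₁ + λ²₀ α₂₁)`, and
`D = λ¹₀ β₁ β₂ + λ¹₀ α₁₁ (β₂ - α₂₂) + λ¹₀ α₁₂ α₂₁ + β₂ λ²₀ α₂₁ > 0` because `α₂₂ ≤ β₂`,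
so the limit of the quotient is the quotient of the limits.
-/

theorem tendsto_exp_neg_mul_atTop_nhds_zero {b : ℝ} (hb : 0 < b) :
    Tendsto (fun t : ℝ => Real.exp (-b * t)) atTop (nhds 0) :=
  Real.tendsto_exp_atBot.comp (tendsto_id.const_mul_atTop_of_neg (neg_neg_iff_pos.mpr hb))

theorem tendsto_hawkes_death_intensity (l a b : ℝ) (hb : 0 < b) :
    Tendsto (fun t : ℝ => l + l * (1 - Real.exp (-b * t)) * a / b) atTop
      (nhds (l * (a + b) / b)) := by
  have hlim : l * (a + b) / b = l + l * (1 - 0) * a / b := by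
    field_simp
    ring
  rw [hlim]
  exact tendsto_const_nhds.add
    ((((tendsto_const_nhds.sub (tendsto_exp_neg_mul_atTop_nhds_zero hb)).const_mul l).mul_const
      a).div_const b)

theorem tendsto_const_add_two_exp_decay (A B C : ℝ) {b₁ b₂ : ℝ} (hb₁ : 0 < b₁) (hb₂ : 0 < b₂) :
    Tendsto (fun t : ℝ => C + A * Real.exp (-b₁ * t) + B * Real.exp (-b₂ * t)) atTop
      (nhds C) := by
  have h := (tendsto_const_nhds (x := C) |>.add
    ((tendsto_exp_neg_mul_atTop_nhds_zero hb₁).const_mul A)).add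
      ((tendsto_exp_neg_mul_atTop_nhds_zero hb₂).const_mul B)
  simpa using h

theorem stmt_12_general (l1 l2 l3 a11 a12 a21 a22 a3 b1 b2 b3 A B C : ℝ)
    (hl1 : 0 < l1) (hl2 : 0 ≤ l2)
    (ha11 : 0 ≤ a11) (ha12 : 0 ≤ a12) (ha21 : 0 ≤ a21)
    (ha22b2 : a22 ≤ b2)
    (hb1 : 0 < b1) (hb2 : 0 < b2) (hb3 : 0 < b3) (hb12 : b1 ≠ b2)
    (hA : A = l1 / b1 * ((a12 * a21 - a11 * a22) / (b1 - b2))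
        - l1 / b1 * a11 - l2 / b1 * a21)
    (hB : B = l1 / b2 * ((a11 * a22 - a12 * a21) / (b1 - b2)))
    (hC : C = l1 - A - B) :
    Tendsto
      (fun t : ℝ =>
        (l3 + l3 * (1 - Real.exp (-b3 * t)) * a3 / b3) /
          (C + A * Real.exp (-b1 * t) + B * Real.exp (-b2 * t)))
      atTop
      (nhds (l3 * (a3 + b3) * b1 * b2 /
        (b3 * (l1 * b1 * b2 - l1 * (a11 * a22 - a12 * a21)
          + b2 * (l1 * a11 + l2 * a21))))) := by
  set D := l1 * b1 * b2 - l1 * (a11 * a22 - a12 * a21) + b2 * (l1 * a11 + l2 * a21)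
  have hD : 0 < D := by
    have : 0 ≤ l1 * a11 * (b2 - a22) := by have := sub_nonneg.mpr ha22b2; positivity
    have : 0 ≤ l1 * (a12 * a21) + b2 * (l2 * a21) := by positivity
    have : 0 < l1 * b1 * b2 := by positivity
    linarith
  have hCD : C = D / (b1 * b2) := by
    have := sub_ne_zero.mpr hb12
    subst hC hA hB
    field_simp
    ring
  have hC0 : C ≠ 0 := by rw [hCD]; positivity
  have hlim : l3 * (a3 + b3) * b1 * b2 / (b3 * D) = l3 * (a3 + b3) / b3 / C := by
    rw [hCD]
    field_simp
  rw [hlim]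
  exact (tendsto_hawkes_death_intensity l3 a3 b3 hb3).div
    (tendsto_const_add_two_exp_decay A B C hb1 hb2) hC0

/-- the limit as t → ∞ of E[λ³(t)]/E[λ¹(t)] exists and equals the
closed-form critical fitness level f_c. Here
E[λ³(t)] = λ³₀ + λ³₀(1 − e^{−β₃t})α₃/β₃ and
E[λ¹(t)] = C(1,2) + A(1,2)e^{−β₁t} + B(1,2)e^{−β₂t}. -/
theorem stmt_12 (l1 l2 l3 a11 a12 a21 a22 a3 b1 b2 b3 A B C : ℝ)
    (hl1 : 0 < l1) (hl2 : 0 ≤ l2) (hl3 : 0 ≤ l3)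
    (ha11 : 0 ≤ a11) (ha12 : 0 ≤ a12) (ha21 : 0 ≤ a21) (ha22 : 0 ≤ a22)
    (ha22b2 : a22 ≤ b2) (ha3 : 0 ≤ a3)
    (hb1 : 0 < b1) (hb2 : 0 < b2) (hb3 : 0 < b3) (hb12 : b1 ≠ b2)
    (hA : A = l1 / b1 * ((a12 * a21 - a11 * a22) / (b1 - b2))
        - l1 / b1 * a11 - l2 / b1 * a21)
    (hB : B = l1 / b2 * ((a11 * a22 - a12 * a21) / (b1 - b2)))
    (hC : C = l1 - A - B) :
    Tendsto
      (fun t : ℝ =>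
        (l3 + l3 * (1 - Real.exp (-b3 * t)) * a3 / b3) /
          (C + A * Real.exp (-b1 * t) + B * Real.exp (-b2 * t)))
      atTop
      (nhds (l3 * (a3 + b3) * b1 * b2 /
        (b3 * (l1 * b1 * b2 - l1 * (a11 * a22 - a12 * a21)
          + b2 * (l1 * a11 + l2 * a21))))) :=
  stmt_12_general l1 l2 l3 a11 a12 a21 a22 a3 b1 b2 b3 A B C hl1 hl2 ha11 ha12 ha21 ha22b2 hb1 hb2
    hb3 hb12 hA hB hC
end
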